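/- For every h ∈ K{{x}}, the map θ := (h d/dx) = φ_{(x,h)} ∘ d : K{{x}} → K{{x}} is a derivation: it is K-linear, x-adically continuous, and satisfies θ(•_m(f_1,…,f_m)) = Σ_{i=1}^m •_m(f_1,…,f_{i−1}, θ(f_i), f_{i+1},…,f_m) for all m ≥ 2 and all f_1,…,f_m ∈ K{{x}}. -/

import Mathlib

namespace Planar

inductive PVar : Type
  | vx : PVar
  | vy : PVar
deriving DecidableEq

/-- A finite planar reduced rooted tree: every internal vertex has at least two
(ordered) children, encoded as `node t₁ t₂ rest` with children list `t₁ :: t₂ :: rest`;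
leaves are labeled by a variable (an isomorphism class of such a labeled tree is
faithfully represented by this inductive data). -/
inductive PTree : Type
  | leaf : PVar → PTree
  | node : PTree → PTree → List PTree → PTree

namespace PTree

/-- The number of leaves carrying the label `v`. -/
def countLeaf (v : PVar) : PTree → ℕ
  | .leaf w => if w = v then 1 else 0
  | .node t1 t2 rest =>
      countLeaf v t1 + countLeaf v t2 + (rest.attach.map fun t => countLeaf v t.1).sum
decreasing_by
  all_goals simp_wf
  · omega
  · omega
  · have := List.sizeOf_lt_of_mem t.2
    omega

end PTree

/-- `P'(x,y)`: planar monomials plus the empty tree `1_P` (= `none`). -/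
abbrev PT := Option PTree

/-- `deg_x`: the number of leaves labeled `x`. -/
def degx (S : PT) : ℕ := S.elim 0 (PTree.countLeaf .vx)

/-- `deg_y`: the number of leaves labeled `y`. -/
def degy (S : PT) : ℕ := S.elim 0 (PTree.countLeaf .vy)

/-- `m`-ary grafting `•_m` on `P'(x,y)` (`m = l.length`): join the non-trivial entries
at a new root; the conventions `•_m(1_P,…,1_P) = 1_P`, dropping of `1_P`-entries and
`•_2(S,1_P) = •_2(1_P,S) = S` amount to discarding the `1_P`-entries first. -/
def graft (l : List PT) : PT :=
  match l.reduceOption with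
  | [] => none
  | [t] => some t
  | t1 :: t2 :: ts => some (.node t1 t2 ts)

variable (K : Type) [Field K]

/-- The algebra `K{{x,y}` of planar power series in `x` and polynomials in `y`:
functions on `P'(x,y)` such that for every `n` only finitely many monomials of
`x`-degree `n` have a nonzero coefficient. -/
def PSer : Type := {f : PT → K // ∀ n : ℕ, {S : PT | f S ≠ 0 ∧ degx S = n}.Finite}

variable {K}

namespace PSer

private lemma finite_add (f g : PSer K) (n : ℕ) :
    {S : PT | f.1 S + g.1 S ≠ 0 ∧ degx S = n}.Finite := by
  apply ((f.2 n).union (g.2 n)).subset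
  rintro S ⟨hne, hdeg⟩
  by_cases h1 : f.1 S = 0
  · exact Or.inr ⟨by simpa [h1] using hne, hdeg⟩
  · exact Or.inl ⟨h1, hdeg⟩

private lemma finite_neg (f : PSer K) (n : ℕ) :
    {S : PT | -f.1 S ≠ 0 ∧ degx S = n}.Finite := by
  apply (f.2 n).subset
  rintro S ⟨hne, hdeg⟩
  exact ⟨by simpa using hne, hdeg⟩

private lemma finite_zero (n : ℕ) :
    {S : PT | (0 : K) ≠ 0 ∧ degx S = n}.Finite := by
  convert Set.finite_empty using 1
  ext S; simp

private lemma finite_smul (a : K) (f : PSer K) (n : ℕ) :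
    {S : PT | a * f.1 S ≠ 0 ∧ degx S = n}.Finite := by
  apply (f.2 n).subset
  rintro S ⟨hne, hdeg⟩
  exact ⟨fun h => hne (by simp [h]), hdeg⟩

noncomputable instance : AddCommGroup (PSer K) where
  add f g := ⟨fun S => f.1 S + g.1 S, finite_add f g⟩
  zero := ⟨fun _ => 0, finite_zero⟩
  neg f := ⟨fun S => -f.1 S, finite_neg f⟩
  add_assoc f g h := Subtype.ext (funext fun S => add_assoc _ _ _)
  add_comm f g := Subtype.ext (funext fun S => add_comm _ _)
  zero_add f := Subtype.ext (funext fun S => zero_add _)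
  add_zero f := Subtype.ext (funext fun S => add_zero _)
  neg_add_cancel f := Subtype.ext (funext fun S => neg_add_cancel _)
  nsmul n f := ⟨fun S => (n : K) * f.1 S, finite_smul _ f⟩
  nsmul_zero f := Subtype.ext (funext fun S => by
    show ((0 : ℕ) : K) * f.1 S = (0 : K); simp)
  nsmul_succ n f := Subtype.ext (funext fun S => by
    show ((n + 1 : ℕ) : K) * f.1 S = (n : K) * f.1 S + f.1 S; push_cast; ring)
  zsmul n f := ⟨fun S => (n : K) * f.1 S, finite_smul _ f⟩
  zsmul_zero' f := Subtype.ext (funext fun S => by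
    show ((0 : ℤ) : K) * f.1 S = (0 : K); simp)
  zsmul_succ' n f := Subtype.ext (funext fun S => by
    show ((Int.ofNat n.succ : ℤ) : K) * f.1 S = ((Int.ofNat n : ℤ) : K) * f.1 S + f.1 S
    simp only [Int.ofNat_eq_coe]; push_cast; ring)
  zsmul_neg' n f := Subtype.ext (funext fun S => by
    show ((Int.negSucc n : ℤ) : K) * f.1 S = -(((n.succ : ℤ) : K) * f.1 S)
    simp [Int.negSucc_eq]; push_cast; ring)

noncomputable instance : Module K (PSer K) where
  smul a f := ⟨fun S => a * f.1 S, finite_smul a f⟩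
  one_smul f := Subtype.ext (funext fun S => one_mul _)
  mul_smul a b f := Subtype.ext (funext fun S => mul_assoc _ _ _)
  smul_zero a := Subtype.ext (funext fun S => mul_zero _)
  smul_add a f g := Subtype.ext (funext fun S => mul_add _ _ _)
  add_smul a b f := Subtype.ext (funext fun S => add_mul _ _ _)
  zero_smul f := Subtype.ext (funext fun S => zero_mul _)

@[simp] lemma add_coeff (f g : PSer K) (S : PT) : (f + g).1 S = f.1 S + g.1 S := rfl
@[simp] lemma smul_coeff (a : K) (f : PSer K) (S : PT) : (a • f).1 S = a * f.1 S := rfl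
@[simp] lemma zero_coeff (S : PT) : (0 : PSer K).1 S = 0 := rfl

end PSer

open PSer

/-- The indicator series of a single planar monomial `S ∈ P'(x,y)`. -/
noncomputable def mono (S : PT) : PSer K := by
  classical
  refine ⟨fun T => if T = S then 1 else 0, fun n => (Set.finite_singleton S).subset ?_⟩
  rintro T ⟨h1, -⟩
  by_contra hc
  exact h1 (if_neg (by simpa [Set.mem_singleton_iff] using hc))

/-- The unit series `1_P` (the empty tree). -/
noncomputable def onePS : PSer K := mono none

/-- The series `x` (the one-vertex tree labeled `x`). -/
noncomputable def Xps : PSer K := mono (some (.leaf .vx))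

/-- The series `y = dx` (the one-vertex tree labeled `y`). -/
noncomputable def Yps : PSer K := mono (some (.leaf .vy))

/-- Coefficient of the product `•_m(f₁,…,f_m)` at `S`: the (finite) sum of
`c_{S₁}(f₁)⋯c_{S_m}(f_m)` over all decompositions `S = •_m(S₁,…,S_m)`. -/
noncomputable def bulletCoeff (fs : List (PSer K)) (S : PT) : K :=
  ∑ᶠ t ∈ {t : List PT | t.length = fs.length ∧ graft t = S},
    (List.zipWith (fun f u => f.1 u) fs t).prod

open Classical in
/-- The `m`-ary product `•_m(f₁,…,f_m)` on `K{{x,y}` (`m = fs.length`). -/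
noncomputable def bullet (fs : List (PSer K)) : PSer K :=
  if h : ∀ n : ℕ, {S : PT | bulletCoeff fs S ≠ 0 ∧ degx S = n}.Finite
  then ⟨bulletCoeff fs, h⟩ else 0

/-- The `x`-order `ord_x(f) ∈ ℕ ∪ {∞}`: the least `x`-degree of a monomial with
nonzero coefficient (`∞` for `f = 0`). -/
noncomputable def ordx (f : PSer K) : ℕ∞ :=
  ⨅ S ∈ {S : PT | f.1 S ≠ 0}, (degx S : ℕ∞)

/-- The `x`-adic absolute value `|f|ₓ = (1/2)^{ord_x f}` (`= 0` for `f = 0`). -/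
noncomputable def normx (f : PSer K) : ℝ :=
  if ordx f = ⊤ then 0 else (2⁻¹ : ℝ) ^ (ordx f).toNat

/-- The `x`-adic distance `|f - g|ₓ`. -/
noncomputable def distx (f g : PSer K) : ℝ := normx (f - g)

/-- A Cauchy sequence for the `x`-adic distance. -/
def IsCauchySeq (u : ℕ → PSer K) : Prop :=
  ∀ ε : ℝ, 0 < ε → ∃ N : ℕ, ∀ p q : ℕ, N ≤ p → N ≤ q → distx (u p) (u q) < ε

/-- Convergence of a sequence to `f` for the `x`-adic distance. -/
def TendstoSeq (u : ℕ → PSer K) (f : PSer K) : Prop :=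
  ∀ ε : ℝ, 0 < ε → ∃ N : ℕ, ∀ p : ℕ, N ≤ p → distx (u p) f < ε

/-- Continuity of a map between two spaces equipped with distance functions. -/
def ContWrt {α β : Type*} (dα : α → α → ℝ) (dβ : β → β → ℝ) (φ : α → β) : Prop :=
  ∀ a : α, ∀ ε : ℝ, 0 < ε → ∃ δ : ℝ, 0 < δ ∧ ∀ b : α, dα b a < δ → dβ (φ b) (φ a) < ε

/-- The property of being supported on monomials all of whose leaves are labeled `x`. -/
def OnlyX (f : PSer K) : Prop := ∀ S : PT, f.1 S ≠ 0 → degy S = 0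

variable (K) in
/-- `K{{x}}`, the closed unital subalgebra of `K{{x,y}` generated by `x`, as a
submodule: the series supported on `1_P` and trees all of whose leaves are labeled `x`. -/
noncomputable def kxSub : Submodule K (PSer K) where
  carrier := {f | OnlyX f}
  add_mem' := by
    intro f g hf hg S hS
    by_cases h1 : f.1 S = 0
    · exact hg S (by simpa [h1] using hS)
    · exact hf S h1
  zero_mem' := by intro S hS; simp at hS
  smul_mem' := by
    intro a f hf S hS
    exact hf S (fun h => hS (by simp [h]))

variable (K) in
/-- The space `K{{x}}` of planar power series in `x`. -/
abbrev Kx : Type _ := ↥(kxSub K)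

@[simp] lemma mem_kxSub {f : PSer K} : f ∈ kxSub K ↔ OnlyX f := Iff.rfl

/-- The `x`-adic distance on `K{{x}}`. -/
noncomputable def distKx (f g : Kx K) : ℝ := distx f.1 g.1

lemma onePS_mem_kxSub : onePS ∈ kxSub (K := K) := by
  intro S hS
  by_cases h : S = none
  · subst h; rfl
  · exact absurd (if_neg h) hS

lemma Xps_mem_kxSub : Xps ∈ kxSub (K := K) := by
  intro S hS
  by_cases h : S = some (.leaf .vx)
  · subst h; simp [degy, PTree.countLeaf]
  · exact absurd (if_neg h) hS

/-- `1_P` as an element of `K{{x}}`. -/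
noncomputable def oneX : Kx K := ⟨onePS, onePS_mem_kxSub⟩

/-- `x` as an element of `K{{x}}`. -/
noncomputable def xX : Kx K := ⟨Xps, Xps_mem_kxSub⟩

open Classical in
/-- The `m`-ary product `•_m` on `K{{x}}` (`m = fs.length`). -/
noncomputable def bulletX (fs : List (Kx K)) : Kx K :=
  if h : bullet (fs.map (fun f => f.1)) ∈ kxSub K
  then ⟨bullet (fs.map (fun f => f.1)), h⟩ else 0

open Classical in
/-- The homogeneous component of degree `n` (w.r.t. `deg_x`) of a planar power series. -/
noncomputable def comp (f : PSer K) (n : ℕ) : PSer K :=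
  ⟨fun S => if degx S = n then f.1 S else 0, by
    intro m
    apply (f.2 m).subset
    rintro S ⟨h1, h2⟩
    refine ⟨?_, h2⟩
    by_cases hd : degx S = n
    · simpa [hd] using h1
    · simp [hd] at h1⟩

/-- The homogeneous component of degree `n` of an element of `K{{x}}`. -/
noncomputable def compX (f : Kx K) (n : ℕ) : Kx K :=
  ⟨comp f.1 n, by
    intro S hS
    apply (mem_kxSub.mp f.2) S
    simp only [comp] at hS
    by_cases hd : degx S = n
    · simpa [hd] using hS
    · simp [hd] at hS⟩

/-- A substitution homomorphism `φ_{(g,h)} : K{{x,y} → K{{x,y}`: `K`-linear, compatible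
with all grafting operations `•_m` (`m ≥ 2`), unital, `x ↦ g`, `y ↦ h`, and continuous
for the `x`-adic topology. -/
structure IsSubstHom (g h : PSer K) (φ : PSer K → PSer K) : Prop where
  linear : IsLinearMap K φ
  map_graft : ∀ fs : List (PSer K), 2 ≤ fs.length → φ (bullet fs) = bullet (fs.map φ)
  map_one : φ onePS = onePS
  map_X : φ Xps = g
  map_Y : φ Yps = h
  cont : ContWrt distx distx φ

/-- A substitution homomorphism `φ_g : K{{x}} → K{{x}}` with `x ↦ g`. -/
structure IsSubstHomX (g : Kx K) (φ : Kx K → Kx K) : Prop where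
  linear : IsLinearMap K φ
  map_graft : ∀ fs : List (Kx K), 2 ≤ fs.length → φ (bulletX fs) = bulletX (fs.map φ)
  map_one : φ oneX = oneX
  map_X : φ xX = g
  cont : ContWrt distKx distKx φ

/-- The universal derivation `d : K{{x}} → K{{x,y}`: continuous, `K`-linear, `d x = y`,
and satisfying the Leibniz rule for every grafting operation `•_m` (`m ≥ 2`). -/
structure IsUDeriv (d : Kx K → PSer K) : Prop where
  linear : IsLinearMap K d
  cont : ContWrt distKx distx d
  map_X : d xX = Yps
  leibniz : ∀ fs : List (Kx K), 2 ≤ fs.length →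
    d (bulletX fs) = ∑ i : Fin fs.length,
      bullet ((fs.map (fun f => f.1)).set i.1 (d (fs.get i)))

/-- The `k`-ary planar exponential series `Exp_k(x)`: constant coefficient `1`,
coefficient `1` at `x`, and `Exp_k(kx) = •_k(Exp_k(x),…,Exp_k(x))`. -/
structure IsExp (k : ℕ) (f : Kx K) : Prop where
  coeff_one : f.1.1 none = 1
  coeff_X : f.1.1 (some (.leaf .vx)) = 1
  funEq : ∀ φ : Kx K → Kx K, IsSubstHomX ((k : K) • xX) φ →
    φ f = bulletX (List.replicate k f)

/-- `ℓ = Log_k(1+x)`, the planar logarithm attached to a planar exponential series `e`: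
`ord_x ℓ ≥ 1` and `ℓ(e - 1) = x`. -/
structure IsLogOf (e ℓ : Kx K) : Prop where
  ord : 1 ≤ ordx ℓ.1
  eq : ∀ φ : Kx K → Kx K, IsSubstHomX (e - oneX) φ → φ ℓ = xX

end Planar

/-! The substitution `φ = φ_{(x,h)}` fixes every series of `K{{x}}`. It fixes `1_P` and `x`
and commutes with grafting, which builds every tree with only `x`-leaves from its leaves, so it
fixes each such monomial; by linearity it fixes the truncations of `f ∈ K{{x}}`, which converge
`x`-adically to `f`, so continuity gives `φ f = f`. Applying `φ` to the Leibniz rule of `d`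
therefore leaves every factor `f_j` alone and turns `d f_i` into `θ f_i`. -/

namespace Planar

theorem PTree.induction {P : PTree → Prop} (leaf : ∀ v, P (.leaf v))
    (node : ∀ t₁ t₂ ts, P t₁ → P t₂ → (∀ u ∈ ts, P u) → P (.node t₁ t₂ ts)) (t : PTree) :
    P t :=
  PTree.rec (motive_2 := fun ts => ∀ u ∈ ts, P u) leaf
    (fun t₁ t₂ ts h₁ h₂ hs => node t₁ t₂ ts h₁ h₂ hs)
    (fun _ hu => absurd hu List.not_mem_nil)
    (fun _ _ ht hts _ hu => (List.mem_cons.1 hu).elim (· ▸ ht) (hts _)) t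

theorem PTree.countLeaf_node_eq_zero_iff {v : PVar} {t₁ t₂ : PTree} {ts : List PTree} :
    (PTree.node t₁ t₂ ts).countLeaf v = 0 ↔ ∀ u ∈ t₁ :: t₂ :: ts, u.countLeaf v = 0 := by
  rw [PTree.countLeaf]
  simp [List.sum_eq_zero_iff, and_assoc]

lemma ContWrt.comp {α β γ : Type*} {dα : α → α → ℝ} {dβ : β → β → ℝ} {dγ : γ → γ → ℝ}
    {g : β → γ} {f : α → β} (hg : ContWrt dβ dγ g) (hf : ContWrt dα dβ f) :
    ContWrt dα dγ (g ∘ f) := fun a ε hε =>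
  let ⟨δ₁, hδ₁, hg'⟩ := hg (f a) ε hε
  let ⟨δ₂, hδ₂, hf'⟩ := hf a δ₁ hδ₁
  ⟨δ₂, hδ₂, fun b hb => hg' (f b) (hf' b hb)⟩

variable {K : Type} [Field K]

namespace PSer

@[simp] lemma neg_coeff (f : PSer K) (S : PT) : (-f).1 S = -f.1 S := rfl

@[simp] lemma sub_coeff (f g : PSer K) (S : PT) : (f - g).1 S = f.1 S - g.1 S := by
  rw [sub_eq_add_neg, sub_eq_add_neg, add_coeff, neg_coeff]

variable (K) in
noncomputable def coeffLinearMap (S : PT) : PSer K →ₗ[K] K where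
  toFun f := f.1 S
  map_add' _ _ := rfl
  map_smul' _ _ := rfl

lemma sum_coeff {ι : Type*} (s : Finset ι) (f : ι → PSer K) (S : PT) :
    (∑ i ∈ s, f i).1 S = ∑ i ∈ s, (f i).1 S :=
  map_sum (coeffLinearMap K S) f s

end PSer

open Classical in
lemma mono_coeff (S T : PT) : (mono (K := K) S).1 T = if T = S then 1 else 0 := rfl

lemma lt_ordx_iff {f : PSer K} {n : ℕ} :
    (n : ℕ∞) < ordx f ↔ ∀ S, degx S ≤ n → f.1 S = 0 := by
  rw [← ENat.add_one_le_iff (ENat.natCast_ne_top n), ordx, le_iInf₂_iff]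
  refine forall_congr' fun S => ?_
  rw [← not_imp_not, not_le]
  norm_cast
  simp only [Set.mem_ofPred_eq, not_not, Nat.lt_add_one_iff]

lemma normx_lt_pow_iff {f : PSer K} {n : ℕ} :
    normx f < 2⁻¹ ^ n ↔ ∀ S, degx S ≤ n → f.1 S = 0 := by
  rw [← lt_ordx_iff, normx]
  split_ifs with h
  · simp [h]
  · lift ordx f to ℕ using h with k
    rw [ENat.toNat_natCast, Nat.cast_lt]
    exact pow_lt_pow_iff_right_of_lt_one₀ (by norm_num) (by norm_num)

lemma bullet_eq_of_bulletCoeff_eq {fs : List (PSer K)} {g : PSer K}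
    (h : bulletCoeff fs = g.1) : bullet fs = g := by
  rw [bullet]
  exact (dif_pos (h ▸ g.2)).trans (Subtype.ext h)

open Classical in
lemma prod_zipWith_mono_coeff (l t : List PT) (hlen : t.length = l.length) :
    (List.zipWith (fun f u => f.1 u) (l.map (mono (K := K))) t).prod =
      if t = l then 1 else 0 := by
  induction l generalizing t with
  | nil => simp_all
  | cons S l ih =>
    obtain _ | ⟨T, t⟩ := t
    · simp at hlen
    rw [List.map_cons, List.zipWith_cons_cons, List.prod_cons, mono_coeff,
      ih t (Nat.succ_injective hlen)]
    by_cases hT : T = S <;> by_cases ht : t = l <;> simp [hT, ht]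

lemma bullet_map_mono (l : List PT) : bullet (l.map (mono (K := K))) = mono (graft l) := by
  classical
  refine bullet_eq_of_bulletCoeff_eq (funext fun T => ?_)
  rw [bulletCoeff, finsum_mem_congr rfl fun t ht => prod_zipWith_mono_coeff l t
    (by simpa using ht.1), finsum_mem_def, finsum_eq_single _ l, mono_coeff]
  · simp [Set.indicator_apply, eq_comm]
  · intro t ht
    simp [ht]

lemma graft_map_some (t₁ t₂ : PTree) (ts : List PTree) :
    graft ((t₁ :: t₂ :: ts).map some) = some (.node t₁ t₂ ts) := by
  simp [graft, List.reduceOption]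

lemma finite_coeff_ne_zero_degx_le (f : PSer K) (m : ℕ) :
    {S : PT | f.1 S ≠ 0 ∧ degx S ≤ m}.Finite := by
  refine ((Finset.range (m + 1)).finite_toSet.biUnion fun n _ => f.2 n).subset ?_
  rintro S ⟨hS, hdeg⟩
  exact Set.mem_biUnion (Finset.mem_range.2 (Nat.lt_succ_of_le hdeg)) ⟨hS, rfl⟩

noncomputable def trunc (f : PSer K) (m : ℕ) : PSer K :=
  ∑ S ∈ (finite_coeff_ne_zero_degx_le f m).toFinset, f.1 S • mono S

open Classical in
lemma trunc_coeff (f : PSer K) (m : ℕ) (T : PT) :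
    (trunc f m).1 T = if degx T ≤ m then f.1 T else 0 := by
  simp only [trunc, PSer.sum_coeff, PSer.smul_coeff, mono_coeff, mul_ite, mul_one, mul_zero,
    Finset.sum_ite_eq, Set.Finite.mem_toFinset, Set.mem_ofPred_eq]
  by_cases hT : f.1 T = 0 <;> simp [hT]

lemma distx_trunc_lt (f : PSer K) (m : ℕ) : distx (trunc f m) f < 2⁻¹ ^ m :=
  normx_lt_pow_iff.2 fun S hS => by rw [PSer.sub_coeff, trunc_coeff, if_pos hS, sub_self]

namespace IsSubstHom

variable {g : PSer K} {φ : PSer K → PSer K}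

lemma map_mono_some (hφ : IsSubstHom Xps g φ) (t : PTree) (ht : t.countLeaf .vy = 0) :
    φ (mono (some t)) = mono (some t) := by
  induction t using PTree.induction with
  | leaf v =>
    cases v
    · exact hφ.map_X
    · simp [PTree.countLeaf] at ht
  | node t₁ t₂ ts ih₁ ih₂ ih =>
    have hchildren := PTree.countLeaf_node_eq_zero_iff.1 ht
    have ih' : ∀ u ∈ t₁ :: t₂ :: ts, φ (mono (some u)) = mono (some u) := by
      simp only [List.mem_cons, forall_eq_or_imp] at hchildren ⊢
      exact ⟨ih₁ hchildren.1, ih₂ hchildren.2.1, fun u hu => ih u hu (hchildren.2.2 u hu)⟩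
    rw [← graft_map_some, ← bullet_map_mono, hφ.map_graft _ (by simp)]
    simp only [List.map_map]
    exact congrArg bullet (List.map_congr_left ih')

lemma map_mono (hφ : IsSubstHom Xps g φ) {S : PT} (hS : degy S = 0) : φ (mono S) = mono S := by
  cases S with
  | none => exact hφ.map_one
  | some t => exact hφ.map_mono_some t hS

lemma map_trunc (hφ : IsSubstHom Xps g φ) {f : PSer K} (hf : OnlyX f) (m : ℕ) :
    φ (trunc f m) = trunc f m := by
  rw [trunc, ← IsLinearMap.mk'_apply hφ.linear, map_sum]
  refine Finset.sum_congr rfl fun S hS => ?_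
  rw [map_smul, IsLinearMap.mk'_apply, hφ.map_mono (hf S ((Set.Finite.mem_toFinset _).1 hS).1)]

lemma map_eq_self_of_onlyX (hφ : IsSubstHom Xps g φ) {f : PSer K} (hf : OnlyX f) : φ f = f := by
  refine Subtype.ext (funext fun S => ?_)
  obtain ⟨δ, hδ, hcont⟩ := hφ.cont f (2⁻¹ ^ degx S) (by positivity)
  obtain ⟨m₀, hm₀⟩ := exists_pow_lt_of_lt_one hδ (by norm_num : (2⁻¹ : ℝ) < 1)
  set m := max (degx S) m₀
  have hclose : distx (trunc f m) f < δ :=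
    (distx_trunc_lt f m).trans_le <| (pow_le_pow_of_le_one (by norm_num) (by norm_num)
      (le_max_right _ _)).trans hm₀.le
  have := normx_lt_pow_iff.1 (hφ.map_trunc hf m ▸ hcont _ hclose) S le_rfl
  rwa [PSer.sub_coeff, trunc_coeff, if_pos (le_max_left _ _), sub_eq_zero, eq_comm] at this

end IsSubstHom

end Planar

open Planar in
/-- For every `h ∈ K{{x}}`, the map `θ = (h d/dx) = φ_{(x,h)} ∘ d` is a
derivation on `K{{x}}`: `K`-linear, `x`-adically continuous, and satisfying the general
product rule for every grafting operation `•_m` (`m ≥ 2`). -/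
theorem planar_h_ddx_is_derivation (K : Type) [Field K]
    (h : Kx K)
    (φ : PSer K → PSer K) (hφ : IsSubstHom Xps h.1 φ)
    (d : Kx K → PSer K) (hd : IsUDeriv d) :
    IsLinearMap K (fun f : Kx K => φ (d f)) ∧
    ContWrt distKx distx (fun f : Kx K => φ (d f)) ∧
    (∀ fs : List (Kx K), 2 ≤ fs.length →
      φ (d (bulletX fs)) = ∑ i : Fin fs.length,
        bullet ((fs.map (fun t => t.1)).set i.1 (φ (d (fs.get i))))) := by
  have hfix : ∀ f : Kx K, φ f.1 = f.1 := fun f => hφ.map_eq_self_of_onlyX f.2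
  refine ⟨((IsLinearMap.mk' φ hφ.linear).comp (IsLinearMap.mk' d hd.linear)).isLinear,
    hφ.cont.comp hd.cont, fun fs hfs => ?_⟩
  rw [hd.leibniz fs hfs, ← IsLinearMap.mk'_apply hφ.linear, map_sum]
  refine Finset.sum_congr rfl fun i _ => ?_
  rw [IsLinearMap.mk'_apply, hφ.map_graft _ (by simpa using hfs), List.map_set, List.map_map]
  congr 2
  exact List.map_congr_left fun f _ => hfix f
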